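/- arXiv:1910.11442 — 2 statements merged into one kernel-verified Lean document; each statement's English description precedes it below -/
import Mathlib

section
/- Let (M,d) be a compact metric space, E : M → ℝ continuous and nonnegative, h > 0, and χ⁰ ∈ M. Let χ : ℕ → M satisfy χ(0) = χ⁰ and, for every n ≥ 1, χ(n) minimizes u ↦ d²(u, χ(n−1))/(2h) + E(u) over M; let χ_h(t) := χ(n) for t ∈ [nh, (n+1)h) be the piecewise constant interpolation. Let u : (0,∞) → M be such that for every n ≥ 1 and t ∈ ((n−1)h, nh], u(t) minimizes v ↦ d²(v, χ(n−1))/(2(t−(n−1)h)) + E(v) over M, with u(nh) = χ(n). Then (i) E(u(t)) ≤ E(χ_h(t−h)) for all t > 0 (equivalently E(u(t)) ≤ E(χ(n−1)) for t ∈ ((n−1)h, nh]), and (ii) ∫_0^∞ d²(u(t), χ_h(t))/(2h²) dt ≤ E(χ⁰). -/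
/-!
The energies decrease because `E y ≤ E x` whenever `y` is a prox point of `x`. For the
dissipation estimate, interpolate the energies `E (χ n)` by the Moreau envelopes
`σ ↦ inf_v d(v, χ n)² / (2σ) + E v`, `σ = t - n h`. The resulting function of `t` is antitone,
starts at `E χ⁰` and stays nonnegative, and its difference quotients at `t` are bounded below by
`d(u t, χ n)² / (2 τ σ) ≥ d(u t, χh t)² / (2 h²)` because `u t` realizes the envelope at
`τ = t - n h`. Integrating the derivative of a monotone function against Lebesgue measure never
exceeds its total variation, which gives the bound.
-/

open MeasureTheory Filter Topology
open scoped ENNReal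

lemma exists_nat_mul_lt_le {h t : ℝ} (hh : 0 < h) (ht : 0 < t) :
    ∃ n : ℕ, n * h < t ∧ t ≤ (n + 1) * h := by
  obtain ⟨n, hn⟩ : ∃ n, ⌈t / h⌉₊ = n + 1 :=
    Nat.exists_eq_succ_of_ne_zero (Nat.ceil_pos.2 (div_pos ht hh)).ne'
  have hlt : ((n + 1 : ℕ) : ℝ) < t / h + 1 := hn ▸ Nat.ceil_lt_add_one (div_pos ht hh).le
  have hle : t / h ≤ ((n + 1 : ℕ) : ℝ) := hn ▸ Nat.le_ceil _
  push_cast at hlt hle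
  exact ⟨n, by rw [← lt_div_iff₀ hh]; linarith, (div_le_iff₀ hh).1 hle⟩

lemma lt_floor_div_add_one_mul {h : ℝ} (hh : 0 < h) (t : ℝ) : t < (⌊t / h⌋₊ + 1) * h :=
  (div_lt_iff₀ hh).1 (Nat.lt_floor_add_one _)

lemma floor_div_mul_le {h : ℝ} (hh : 0 < h) {t : ℝ} (ht : 0 ≤ t) : ⌊t / h⌋₊ * h ≤ t :=
  (le_div_iff₀ hh).1 (Nat.floor_le (div_nonneg ht hh.le))

lemma floor_div_eq_of_mem_Ico {h : ℝ} (hh : 0 < h) {n : ℕ} {t : ℝ} (hlo : n * h ≤ t)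
    (hhi : t < (n + 1) * h) : ⌊t / h⌋₊ = n :=
  (Nat.floor_eq_iff (div_nonneg (le_trans (by positivity) hlo) hh.le)).2
    ⟨(le_div_iff₀ hh).2 hlo, (div_lt_iff₀ hh).2 hhi⟩

section MoreauEnvelope

variable {M : Type*} [PseudoMetricSpace M] {E : M → ℝ} {x y : M} {σ τ : ℝ}

/-- For `σ ≤ 0` the value is `E x`, which makes `σ ↦ moreauEnvelope E x σ` antitone on all
of `ℝ`. -/
noncomputable def moreauEnvelope (E : M → ℝ) (x : M) (σ : ℝ) : ℝ :=
  if 0 < σ then ⨅ v, dist v x ^ 2 / (2 * σ) + E v else E x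

def IsProxPoint (E : M → ℝ) (σ : ℝ) (x y : M) : Prop :=
  ∀ v, dist y x ^ 2 / (2 * σ) + E y ≤ dist v x ^ 2 / (2 * σ) + E v

lemma moreauEnvelope_of_nonpos (hσ : σ ≤ 0) : moreauEnvelope E x σ = E x :=
  if_neg hσ.not_gt

lemma moreauEnvelope_le (hE : ∀ v, 0 ≤ E v) (hσ : 0 < σ) (v : M) :
    moreauEnvelope E x σ ≤ dist v x ^ 2 / (2 * σ) + E v := by
  rw [moreauEnvelope, if_pos hσ]
  exact ciInf_le ⟨0, by rintro _ ⟨w, rfl⟩; exact add_nonneg (by positivity) (hE w)⟩ v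

lemma le_moreauEnvelope (hσ : 0 < σ) {a : ℝ} (ha : ∀ v, a ≤ dist v x ^ 2 / (2 * σ) + E v) :
    a ≤ moreauEnvelope E x σ := by
  have : Nonempty M := ⟨x⟩
  rw [moreauEnvelope, if_pos hσ]
  exact le_ciInf ha

lemma moreauEnvelope_nonneg (hE : ∀ v, 0 ≤ E v) (σ : ℝ) : 0 ≤ moreauEnvelope E x σ := by
  rcases le_or_gt σ 0 with hσ | hσ
  · rw [moreauEnvelope_of_nonpos hσ]
    exact hE x
  · exact le_moreauEnvelope hσ fun v => add_nonneg (by positivity) (hE v)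

lemma moreauEnvelope_le_self (hE : ∀ v, 0 ≤ E v) (σ : ℝ) : moreauEnvelope E x σ ≤ E x := by
  rcases le_or_gt σ 0 with hσ | hσ
  · exact (moreauEnvelope_of_nonpos hσ).le
  · simpa using moreauEnvelope_le (x := x) hE hσ x

lemma moreauEnvelope_antitone (hE : ∀ v, 0 ≤ E v) : Antitone (moreauEnvelope E x) := by
  intro τ σ hτσ
  rcases le_or_gt τ 0 with hτ | hτ
  · rw [moreauEnvelope_of_nonpos hτ]
    exact moreauEnvelope_le_self hE σ
  · refine le_moreauEnvelope hτ fun v => (moreauEnvelope_le hE (hτ.trans_le hτσ) v).trans ?_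
    gcongr

namespace IsProxPoint

lemma energy_le (hy : IsProxPoint E σ x y) (hσ : 0 < σ) : E y ≤ E x := by
  have hx := hy x
  have : 0 ≤ dist y x ^ 2 / (2 * σ) := by positivity
  rw [dist_self, zero_pow two_ne_zero, zero_div, zero_add] at hx
  linarith

lemma moreauEnvelope_eq (hy : IsProxPoint E σ x y) (hE : ∀ v, 0 ≤ E v) (hσ : 0 < σ) :
    moreauEnvelope E x σ = dist y x ^ 2 / (2 * σ) + E y :=
  le_antisymm (moreauEnvelope_le hE hσ y) (le_moreauEnvelope hσ hy)

lemma energy_le_moreauEnvelope (hy : IsProxPoint E σ x y) (hσ : 0 < σ) (hτσ : τ ≤ σ) :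
    E y ≤ moreauEnvelope E x τ := by
  rcases le_or_gt τ 0 with hτ | hτ
  · rw [moreauEnvelope_of_nonpos hτ]
    exact hy.energy_le hσ
  · refine le_moreauEnvelope hτ fun v => ?_
    have : dist v x ^ 2 / (2 * σ) ≤ dist v x ^ 2 / (2 * τ) := by gcongr
    have : 0 ≤ dist y x ^ 2 / (2 * σ) := by positivity
    linarith [hy v]

lemma sq_dist_div_le_slope (hy : IsProxPoint E τ x y) (hE : ∀ v, 0 ≤ E v) (hτ : 0 < τ)
    (hτσ : τ < σ) :
    dist y x ^ 2 / (2 * (τ * σ)) ≤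
      (moreauEnvelope E x τ - moreauEnvelope E x σ) / (σ - τ) := by
  have hσ : 0 < σ := hτ.trans hτσ
  have hyσ := moreauEnvelope_le (x := x) hE hσ y
  have hsplit : dist y x ^ 2 / (2 * (τ * σ)) * (σ - τ) =
      dist y x ^ 2 / (2 * τ) - dist y x ^ 2 / (2 * σ) := by
    field_simp
  rw [le_div_iff₀ (sub_pos.2 hτσ), hy.moreauEnvelope_eq hE hτ, hsplit]
  linarith

end IsProxPoint

end MoreauEnvelope

section Interpolation

variable {M : Type*} [PseudoMetricSpace M] {E : M → ℝ} {χ : ℕ → M} {h : ℝ}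

/-- De Giorgi's variational interpolation of the energies `E (χ n)`: on `[n h, (n + 1) h)` it is
the Moreau envelope of `E` at `χ n` with parameter `t - n h`. For `t < 0` it is `E (χ 0)`,
since then `⌊t / h⌋₊ = 0`. -/
noncomputable def interpolatedEnergy (E : M → ℝ) (χ : ℕ → M) (h t : ℝ) : ℝ :=
  moreauEnvelope E (χ ⌊t / h⌋₊) (t - ⌊t / h⌋₊ * h)

lemma interpolatedEnergy_eq (hh : 0 < h) {n : ℕ} {t : ℝ} (hlo : n * h ≤ t)
    (hhi : t < (n + 1) * h) :
    interpolatedEnergy E χ h t = moreauEnvelope E (χ n) (t - n * h) := by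
  rw [interpolatedEnergy, floor_div_eq_of_mem_Ico hh hlo hhi]

lemma interpolatedEnergy_zero : interpolatedEnergy E χ h 0 = E (χ 0) := by
  simp [interpolatedEnergy, moreauEnvelope]

lemma interpolatedEnergy_nonneg (hE : ∀ v, 0 ≤ E v) (t : ℝ) : 0 ≤ interpolatedEnergy E χ h t :=
  moreauEnvelope_nonneg hE _

lemma antitone_energy_comp (hh : 0 < h) (hχ : ∀ n, IsProxPoint E h (χ n) (χ (n + 1))) :
    Antitone (E ∘ χ) :=
  antitone_nat_of_succ_le fun n => (hχ n).energy_le hh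

lemma antitone_interpolatedEnergy (hE : ∀ v, 0 ≤ E v) (hh : 0 < h)
    (hχ : ∀ n, IsProxPoint E h (χ n) (χ (n + 1))) : Antitone (interpolatedEnergy E χ h) := by
  intro s t hst
  obtain hfl | hfl := (Nat.floor_le_floor (div_le_div_of_nonneg_right hst hh.le) :
    ⌊s / h⌋₊ ≤ ⌊t / h⌋₊).eq_or_lt
  · rw [interpolatedEnergy, interpolatedEnergy, hfl]
    exact moreauEnvelope_antitone hE (by linarith)
  · have hs : s - ⌊s / h⌋₊ * h ≤ h := by linarith [lt_floor_div_add_one_mul hh s]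
    calc interpolatedEnergy E χ h t ≤ E (χ ⌊t / h⌋₊) := moreauEnvelope_le_self hE _
      _ ≤ E (χ (⌊s / h⌋₊ + 1)) := antitone_energy_comp hh hχ hfl
      _ ≤ interpolatedEnergy E χ h s := (hχ _).energy_le_moreauEnvelope hh hs

lemma sq_dist_div_le_slope_interpolatedEnergy (hE : ∀ v, 0 ≤ E v) (hh : 0 < h) {n : ℕ} {t : ℝ}
    (hlo : n * h < t) (hhi : t < (n + 1) * h) {y : M} (hy : IsProxPoint E (t - n * h) (χ n) y) :
    ∀ᶠ s in 𝓝[>] t,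
      dist y (χ n) ^ 2 / (2 * h ^ 2) ≤ slope (fun r => -interpolatedEnergy E χ h r) t s := by
  filter_upwards [Ioo_mem_nhdsGT hhi] with s ⟨hts, hsh⟩
  have hτ : 0 < t - n * h := sub_pos.2 hlo
  have hτσ : t - n * h < s - n * h := by linarith
  have hτσh : (t - n * h) * (s - n * h) ≤ h ^ 2 := by
    rw [sq]
    exact mul_le_mul (by linarith) (by linarith) (by linarith) hh.le
  rw [slope_def_field, interpolatedEnergy_eq hh hlo.le hhi,
    interpolatedEnergy_eq hh (by linarith) hsh, neg_sub_neg,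
    show s - t = s - n * h - (t - n * h) by ring]
  calc dist y (χ n) ^ 2 / (2 * h ^ 2)
      ≤ dist y (χ n) ^ 2 / (2 * ((t - n * h) * (s - n * h))) := by
        have := mul_pos hτ (hτ.trans hτσ)
        gcongr
    _ ≤ _ := hy.sq_dist_div_le_slope hE hτ hτσ

end Interpolation

theorem Monotone.measure_stieltjesFunction_Ioi_le {f : ℝ → ℝ} (hf : Monotone f) {C : ℝ}
    (hC : ∀ t, f t ≤ C) (a : ℝ) :
    hf.stieltjesFunction.measure (Set.Ioi a) ≤ ENNReal.ofReal (C - f a) := by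
  set g := hf.stieltjesFunction
  have hgC : ∀ t, g t ≤ C := fun t => by
    rw [hf.stieltjesFunction_eq]
    exact (hf.rightLim_le (lt_add_one t)).trans (hC _)
  have hbdd : BddAbove (Set.range g) := ⟨C, by rintro _ ⟨t, rfl⟩; exact hgC t⟩
  rw [g.measure_Ioi (tendsto_atTop_ciSup g.mono hbdd)]
  refine ENNReal.ofReal_le_ofReal (sub_le_sub (ciSup_le hgC) ?_)
  rw [hf.stieltjesFunction_eq]
  exact hf.le_rightLim le_rfl

theorem Monotone.lintegral_Ioi_le_of_le_slope {f : ℝ → ℝ} (hf : Monotone f) {C : ℝ}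
    (hC : ∀ t, f t ≤ C) (a : ℝ) {g : ℝ → ℝ}
    (hg : ∀ᵐ t, a < t → ∀ᶠ s in 𝓝[>] t, g t ≤ slope f t s) :
    ∫⁻ t in Set.Ioi a, ENNReal.ofReal (g t) ≤ ENNReal.ofReal (C - f a) := by
  set μ := hf.stieltjesFunction.measure
  have hae : ∀ᵐ t ∂volume.restrict (Set.Ioi a), ENNReal.ofReal (g t) ≤ μ.rnDeriv volume t := by
    filter_upwards [ae_restrict_of_ae hg, ae_restrict_of_ae hf.ae_hasDerivAt,
      ae_restrict_mem measurableSet_Ioi] with t hgt hderiv hat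
    have hslope : Tendsto (slope f t) (𝓝[>] t) (𝓝 (μ.rnDeriv volume t).toReal) :=
      (hasDerivAt_iff_tendsto_slope.1 hderiv).mono_left
        (nhdsWithin_mono _ fun s hs => ne_of_gt hs)
    exact (ENNReal.ofReal_le_ofReal (_root_.ge_of_tendsto hslope (hgt hat))).trans
      ENNReal.ofReal_toReal_le
  calc ∫⁻ t in Set.Ioi a, ENNReal.ofReal (g t)
      ≤ ∫⁻ t in Set.Ioi a, μ.rnDeriv volume t := lintegral_mono_ae hae
    _ ≤ μ (Set.Ioi a) := Measure.setLIntegral_rnDeriv_le _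
    _ ≤ ENNReal.ofReal (C - f a) := hf.measure_stieltjesFunction_Ioi_le hC a

theorem stmt_1_general {M : Type*} [MetricSpace M]
    (E : M → ℝ) (hEnonneg : ∀ x, 0 ≤ E x)
    (h : ℝ) (hh : 0 < h) (χ0 : M) (χ : ℕ → M) (hinit : χ 0 = χ0)
    (hmin : ∀ n : ℕ, 1 ≤ n → ∀ v : M,
      dist (χ n) (χ (n - 1)) ^ 2 / (2 * h) + E (χ n) ≤
        dist v (χ (n - 1)) ^ 2 / (2 * h) + E v)
    (χh : ℝ → M)
    (hχh : ∀ n : ℕ, ∀ t : ℝ, (n : ℝ) * h ≤ t → t < ((n : ℝ) + 1) * h → χh t = χ n)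
    (hχh0 : ∀ t : ℝ, t ≤ 0 → χh t = χ 0)
    (u : ℝ → M)
    (humin : ∀ n : ℕ, 1 ≤ n → ∀ t : ℝ, ((n : ℝ) - 1) * h < t → t ≤ (n : ℝ) * h →
      ∀ v : M,
        dist (u t) (χ (n - 1)) ^ 2 / (2 * (t - ((n : ℝ) - 1) * h)) + E (u t) ≤
          dist v (χ (n - 1)) ^ 2 / (2 * (t - ((n : ℝ) - 1) * h)) + E v) :
    (∀ t : ℝ, 0 < t → E (u t) ≤ E (χh (t - h))) ∧
    (∫⁻ t in Set.Ioi (0 : ℝ),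
        ENNReal.ofReal (dist (u t) (χh t) ^ 2 / (2 * h ^ 2)) ≤
      ENNReal.ofReal (E χ0)) := by
  subst hinit
  have hχ (n : ℕ) : IsProxPoint E h (χ n) (χ (n + 1)) := by
    simpa [IsProxPoint] using hmin (n + 1) n.succ_pos
  have hu (n : ℕ) (t : ℝ) (hlo : n * h < t) (hhi : t ≤ (n + 1) * h) :
      IsProxPoint E (t - n * h) (χ n) (u t) := by
    simpa [IsProxPoint] using humin (n + 1) n.succ_pos t (by simpa using hlo) (by simpa using hhi)
  have hχh_floor (t : ℝ) : χh t = χ ⌊t / h⌋₊ := by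
    rcases le_or_gt t 0 with ht | ht
    · rw [hχh0 t ht, Nat.floor_eq_zero.2 (by linarith [div_nonpos_of_nonpos_of_nonneg ht hh.le])]
    · exact hχh _ t (floor_div_mul_le hh ht.le) (lt_floor_div_add_one_mul hh t)
  refine ⟨fun t ht => ?_, ?_⟩
  · obtain ⟨n, hlo, hhi⟩ := exists_nat_mul_lt_le hh ht
    rw [hχh_floor]
    refine ((hu n t hlo hhi).energy_le (sub_pos.2 hlo)).trans
      (antitone_energy_comp hh hχ (Nat.floor_le_of_le ?_))
    rw [div_le_iff₀ hh]
    linarith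
  · have hF := (antitone_interpolatedEnergy hEnonneg hh hχ).neg
    have hbound := hF.lintegral_Ioi_le_of_le_slope
      (fun t => neg_nonpos.2 (interpolatedEnergy_nonneg hEnonneg t)) 0
      (g := fun t => dist (u t) (χh t) ^ 2 / (2 * h ^ 2)) ?_
    · simpa [interpolatedEnergy_zero] using hbound
    filter_upwards [(Set.countable_range fun k : ℕ => k * h).ae_notMem volume] with t hmult ht
    have hlo := floor_div_mul_le hh ht.le
    have hlo' : ⌊t / h⌋₊ * h < t := hlo.lt_of_ne fun e => hmult ⟨_, e⟩
    have hhi := lt_floor_div_add_one_mul hh t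
    simpa only [hχh_floor] using
      sq_dist_div_le_slope_interpolatedEnergy hEnonneg hh hlo' hhi (hu _ t hlo' hhi.le)

theorem stmt_1 {M : Type*} [MetricSpace M] [CompactSpace M]
    (E : M → ℝ) (hE : Continuous E) (hEnonneg : ∀ x, 0 ≤ E x)
    (h : ℝ) (hh : 0 < h) (χ0 : M) (χ : ℕ → M) (hinit : χ 0 = χ0)
    (hmin : ∀ n : ℕ, 1 ≤ n → ∀ v : M,
      dist (χ n) (χ (n - 1)) ^ 2 / (2 * h) + E (χ n) ≤
        dist v (χ (n - 1)) ^ 2 / (2 * h) + E v)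
    (χh : ℝ → M)
    (hχh : ∀ n : ℕ, ∀ t : ℝ, (n : ℝ) * h ≤ t → t < ((n : ℝ) + 1) * h → χh t = χ n)
    (hχh0 : ∀ t : ℝ, t ≤ 0 → χh t = χ 0)
    (u : ℝ → M)
    (humin : ∀ n : ℕ, 1 ≤ n → ∀ t : ℝ, ((n : ℝ) - 1) * h < t → t ≤ (n : ℝ) * h →
      ∀ v : M,
        dist (u t) (χ (n - 1)) ^ 2 / (2 * (t - ((n : ℝ) - 1) * h)) + E (u t) ≤
          dist v (χ (n - 1)) ^ 2 / (2 * (t - ((n : ℝ) - 1) * h)) + E v)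
    (huend : ∀ n : ℕ, 1 ≤ n → u ((n : ℝ) * h) = χ n) :
    (∀ t : ℝ, 0 < t → E (u t) ≤ E (χh (t - h))) ∧
    (∫⁻ t in Set.Ioi (0 : ℝ),
        ENNReal.ofReal (dist (u t) (χh t) ^ 2 / (2 * h ^ 2)) ≤
      ENNReal.ofReal (E χ0)) :=
  stmt_1_general E hEnonneg h hh χ0 χ hinit hmin χh hχh hχh0 u humin
end

section
/- Let (M,d) be a compact metric space, E : M → ℝ continuous, x₀ ∈ M, and h > 0. Suppose u : (0,h] → M is such that u(s) minimizes v ↦ d²(v, x₀)/(2s) + E(v) over M for every s ∈ (0,h]. Then d²(u(h), x₀)/(2h) + E(u(h)) + ∫_0^h d²(u(s), x₀)/(2s²) ds ≤ E(x₀), where the integral is the Lebesgue integral with values in [0,∞]. -/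
/-!
Let `φ(s)` be the minimal value `d²(u s, x₀)/(2s) + E(u s)` of the proximal problem at time `s`,
extended by `φ(s) = E(x₀)` for `s ≤ 0`. Testing the minimality of `u t` against `v = x₀` gives
`φ ≤ E(x₀)`, and against `v = u s` gives, for `0 < s ≤ t`,
`φ(t) + d²(u s, x₀) (t - s)/(2st) ≤ φ(s)`.
So `φ` is antitone, and wherever it is differentiable (almost everywhere) its right difference
quotients give `-φ'(s) ≥ d²(u s, x₀)/(2s²)`. The integral of the derivative of a monotone function
is at most its increment, so the integral is at most `φ(0) - φ(h) = E(x₀) - φ(h)`.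
-/

open MeasureTheory Filter Topology Set
open scoped ENNReal

theorem MonotoneOn.deriv_nonneg_of_mem_Ioo {f : ℝ → ℝ} {a b s : ℝ} (hf : MonotoneOn f (Icc a b))
    (hs : s ∈ Ioo a b) : 0 ≤ deriv f s := by
  rw [← derivWithin_of_mem_nhds (Icc_mem_nhds hs.1 hs.2)]
  exact hf.derivWithin_nonneg

theorem MonotoneOn.lintegral_ofReal_le_of_le_deriv {f w : ℝ → ℝ} {a b : ℝ} (hab : a ≤ b)
    (hf : MonotoneOn f (Icc a b))
    (hw : ∀ s ∈ Ioo a b, DifferentiableAt ℝ f s → w s ≤ deriv f s) :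
    ∫⁻ s in Ioc a b, ENNReal.ofReal (w s) ≤ ENNReal.ofReal (f b - f a) := by
  have hf' : MonotoneOn f (uIcc a b) := by rwa [uIcc_of_le hab]
  have hfab : 0 ≤ f b - f a := sub_nonneg.2 (hf ⟨le_rfl, hab⟩ ⟨hab, le_rfl⟩ hab)
  have hw_ae : ∀ᵐ s ∂volume.restrict (Ioo a b), w s ≤ deriv f s := by
    rw [ae_restrict_iff' measurableSet_Ioo]
    filter_upwards [(hf.mono Ioo_subset_Icc_self).ae_differentiableWithinAt_of_mem] with s hs hsab
    exact hw s hsab ((hs hsab).differentiableAt (Ioo_mem_nhds hsab.1 hsab.2))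
  have hderiv_nonneg : 0 ≤ᵐ[volume.restrict (Ioo a b)] deriv f :=
    (ae_restrict_iff' measurableSet_Ioo).2 (ae_of_all _ fun s hs => hf.deriv_nonneg_of_mem_Ioo hs)
  have hintegrable : IntegrableOn (deriv f) (Ioo a b) := by
    rw [IntegrableOn, restrict_Ioo_eq_restrict_Ioc]
    exact hf'.intervalIntegrable_deriv.1
  have hintegral_le : ∫ s in a..b, deriv f s ≤ f b - f a := by
    have := hf'.intervalIntegral_deriv_mem_uIcc
    rw [uIcc_of_le hfab] at this
    exact this.2
  rw [← restrict_Ioo_eq_restrict_Ioc]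
  calc ∫⁻ s in Ioo a b, ENNReal.ofReal (w s)
      ≤ ∫⁻ s in Ioo a b, ENNReal.ofReal (deriv f s) :=
        lintegral_mono_ae (hw_ae.mono fun s hs => ENNReal.ofReal_le_ofReal hs)
    _ = ENNReal.ofReal (∫ s in a..b, deriv f s) := by
        rw [intervalIntegral.integral_of_le hab, ← restrict_Ioo_eq_restrict_Ioc,
          ofReal_integral_eq_lintegral_ofReal hintegrable hderiv_nonneg]
    _ ≤ ENNReal.ofReal (f b - f a) := ENNReal.ofReal_le_ofReal hintegral_le

theorem EReal.coe_add_coe_ennreal_le {a c : ℝ} {I : ℝ≥0∞} (hac : a ≤ c)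
    (hI : I ≤ ENNReal.ofReal (c - a)) : (a : EReal) + I ≤ c :=
  calc (a : EReal) + I ≤ a + (ENNReal.ofReal (c - a) : EReal) :=
      add_le_add_right (EReal.coe_ennreal_le_coe_ennreal_iff.2 hI) _
    _ = c := by
      rw [EReal.coe_ennreal_ofReal, max_eq_left (_root_.sub_nonneg.2 hac), ← EReal.coe_add,
        add_sub_cancel]

section Proximal

variable {M : Type*} [MetricSpace M] (E : M → ℝ) (x₀ : M)

noncomputable def proxObjective (s : ℝ) (v : M) : ℝ := dist v x₀ ^ 2 / (2 * s) + E v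

noncomputable def proxValue (u : ℝ → M) (s : ℝ) : ℝ :=
  if 0 < s then proxObjective E x₀ s (u s) else E x₀

theorem proxObjective_sub_proxObjective {s t : ℝ} (hs : s ≠ 0) (ht : t ≠ 0) (v : M) :
    proxObjective E x₀ s v - proxObjective E x₀ t v = dist v x₀ ^ 2 * (t - s) / (2 * s * t) := by
  unfold proxObjective
  field_simp
  ring

variable {E x₀}

theorem proxObjective_add_le_of_forall_le {s t : ℝ} {w : M} (hs : 0 < s) (hst : s ≤ t)
    (hw : ∀ v, proxObjective E x₀ t w ≤ proxObjective E x₀ t v) (v : M) :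
    proxObjective E x₀ t w + dist v x₀ ^ 2 * (t - s) / (2 * s * t) ≤ proxObjective E x₀ s v := by
  linarith [hw v, proxObjective_sub_proxObjective E x₀ hs.ne' (hs.trans_le hst).ne' v]

variable {u : ℝ → M} {h : ℝ}
  (hmin : ∀ s, 0 < s → s ≤ h → ∀ v, proxObjective E x₀ s (u s) ≤ proxObjective E x₀ s v)
include hmin

theorem proxValue_le (s : ℝ) (hsh : s ≤ h) : proxValue E x₀ u s ≤ E x₀ := by
  unfold proxValue
  split_ifs with hs
  · simpa [proxObjective] using hmin s hs hsh x₀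
  · rfl

theorem proxValue_antitoneOn : AntitoneOn (proxValue E x₀ u) (Iic h) := by
  intro s _ t (hth : t ≤ h) hst
  by_cases hs : 0 < s
  · have hgap : 0 ≤ dist (u s) x₀ ^ 2 * (t - s) / (2 * s * t) := by
      have : 0 ≤ t - s := sub_nonneg.2 hst
      have : 0 < t := hs.trans_le hst
      positivity
    rw [proxValue, proxValue, if_pos hs, if_pos (hs.trans_le hst)]
    linarith [proxObjective_add_le_of_forall_le hs hst (hmin t (hs.trans_le hst) hth) (u s)]
  · rw [show proxValue E x₀ u s = E x₀ from if_neg hs]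
    exact proxValue_le hmin t hth

theorem dist_sq_div_le_deriv_neg_proxValue {s : ℝ} (hs : s ∈ Ioo 0 h)
    (hdiff : DifferentiableAt ℝ (fun r => -proxValue E x₀ u r) s) :
    dist (u s) x₀ ^ 2 / (2 * s ^ 2) ≤ deriv (fun r => -proxValue E x₀ u r) s := by
  obtain ⟨hs0, hsh⟩ := hs
  have hlim : Tendsto (fun t => dist (u s) x₀ ^ 2 / (2 * s * t)) (𝓝[>] s)
      (𝓝 (dist (u s) x₀ ^ 2 / (2 * s ^ 2))) := by
    have : ContinuousAt (fun t => dist (u s) x₀ ^ 2 / (2 * s * t)) s :=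
      continuousAt_const.div (continuousAt_const.mul continuousAt_id) (by positivity)
    simpa [sq, mul_assoc] using this.tendsto.mono_left nhdsWithin_le_nhds
  have hslope : ∀ᶠ t in 𝓝[>] s,
      dist (u s) x₀ ^ 2 / (2 * s * t) ≤ slope (fun r => -proxValue E x₀ u r) s t := by
    filter_upwards [Ioo_mem_nhdsGT hsh] with t ⟨hst, hth⟩
    have ht : 0 < t := hs0.trans hst
    have hkey := proxObjective_add_le_of_forall_le hs0 hst.le (hmin t ht hth.le) (u s)
    rw [slope_def_field, proxValue, proxValue, if_pos hs0, if_pos ht, le_div_iff₀ (sub_pos.2 hst),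
      div_mul_eq_mul_div]
    linarith
  exact le_of_tendsto_of_tendsto hlim
    (hdiff.hasDerivAt.tendsto_slope.mono_left (nhdsGT_le_nhdsNE s)) hslope

theorem lintegral_dist_sq_div_le (hh : 0 < h) :
    ∫⁻ s in Ioc 0 h, ENNReal.ofReal (dist (u s) x₀ ^ 2 / (2 * s ^ 2)) ≤
      ENNReal.ofReal (E x₀ - proxValue E x₀ u h) := by
  have hmono : MonotoneOn (fun r => -proxValue E x₀ u r) (Icc 0 h) :=
    ((proxValue_antitoneOn hmin).mono Icc_subset_Iic_self).neg
  have := hmono.lintegral_ofReal_le_of_le_deriv hh.le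
    fun s hs hdiff => dist_sq_div_le_deriv_neg_proxValue hmin hs hdiff
  simpa [proxValue, sub_eq_add_neg, add_comm] using this

end Proximal

theorem stmt_4_general {M : Type*} [MetricSpace M]
    (E : M → ℝ) (x₀ : M) (h : ℝ) (hh : 0 < h)
    (u : ℝ → M)
    (hmin : ∀ s : ℝ, 0 < s → s ≤ h → ∀ v : M,
      dist (u s) x₀ ^ 2 / (2 * s) + E (u s) ≤ dist v x₀ ^ 2 / (2 * s) + E v) :
    ((dist (u h) x₀ ^ 2 / (2 * h) + E (u h) : ℝ) : EReal)
      + ((∫⁻ s in Set.Ioc (0 : ℝ) h,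
          ENNReal.ofReal (dist (u s) x₀ ^ 2 / (2 * s ^ 2)) : ℝ≥0∞) : EReal)
      ≤ ((E x₀ : ℝ) : EReal) := by
  have hvalue : proxValue E x₀ u h = dist (u h) x₀ ^ 2 / (2 * h) + E (u h) := if_pos hh
  rw [← hvalue]
  exact EReal.coe_add_coe_ennreal_le (proxValue_le hmin h le_rfl)
    (lintegral_dist_sq_div_le hmin hh)

theorem stmt_4 {M : Type*} [MetricSpace M] [CompactSpace M]
    (E : M → ℝ) (hE : Continuous E) (x₀ : M) (h : ℝ) (hh : 0 < h)
    (u : ℝ → M)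
    (hmin : ∀ s : ℝ, 0 < s → s ≤ h → ∀ v : M,
      dist (u s) x₀ ^ 2 / (2 * s) + E (u s) ≤ dist v x₀ ^ 2 / (2 * s) + E v) :
    ((dist (u h) x₀ ^ 2 / (2 * h) + E (u h) : ℝ) : EReal)
      + ((∫⁻ s in Set.Ioc (0 : ℝ) h,
          ENNReal.ofReal (dist (u s) x₀ ^ 2 / (2 * s ^ 2)) : ℝ≥0∞) : EReal)
      ≤ ((E x₀ : ℝ) : EReal) :=
  stmt_4_general E x₀ h hh u hmin
end
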